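/- Heat-kernel oscillation bound: for f_n(y) = p_n(x₀,y) + p_{n+1}(x₀,y), and all vertices y, |f_n(y) − f_n(x₀)|² ≤ (2/n)·d(x₀,y)·f_{2⌊n/2⌋}(x₀). -/

import Mathlib

open scoped ENNReal

attribute [local instance] Classical.propDecidable

variable {V : Type*}

/-- Degree of a vertex. -/
noncomputable def vdeg (G : SimpleGraph V) (x : V) : ℕ := (G.neighborSet x).ncard

/-- One-step transition probability of the simple random walk:
`P^x(X_1 = y) = 1/μ_x` for `y ∼ x`, and `0` otherwise. -/
noncomputable def stepP (G : SimpleGraph V) (x y : V) : ℝ :=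
  (G.neighborSet x).indicator (fun _ => ((vdeg G x : ℝ))⁻¹) y

/-- `walkP G n x y = P^x(X_n = y)`, the `n`-step transition probability. -/
noncomputable def walkP (G : SimpleGraph V) : ℕ → V → V → ℝ
  | 0, x, y => if x = y then 1 else 0
  | n + 1, x, y => ∑' z : V, stepP G x z * walkP G n z y

/-- The heat kernel `p_n(x,y) = P^x(X_n = y)/μ_y`. -/
noncomputable def hkP (G : SimpleGraph V) (n : ℕ) (x y : V) : ℝ :=
  walkP G n x y / (vdeg G y : ℝ)

/-- `killedP G B n x y = P^x(X_n = y, n < τ_B)`, the transition probability of the walk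
killed upon exiting `B` (the path stays in `B` up to and including time `n`). -/
noncomputable def killedP (G : SimpleGraph V) (B : Set V) : ℕ → V → V → ℝ
  | 0, x, y => if x = y ∧ x ∈ B then 1 else 0
  | n + 1, x, y => ∑' z : V, B.indicator (fun w => stepP G w z) x * killedP G B n z y

/-- `exitTail G B x n = P^x(τ_B > n)`, the tail of the exit time of `B`. -/
noncomputable def exitTail (G : SimpleGraph V) (B : Set V) (x : V) (n : ℕ) : ℝ :=
  ∑' y : V, killedP G B n x y

/-- `meanExit G B x = E^x τ_B`, the mean exit time of `B`. -/
noncomputable def meanExit (G : SimpleGraph V) (B : Set V) (x : V) : ℝ :=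
  ∑' n : ℕ, exitTail G B x n

/-- `firstHitP G B y n x = P^x(T_y = n, n < τ_B)`: the probability that the walk started
at `x` first hits `y` at time `n`, before exiting `B`. -/
noncomputable def firstHitP (G : SimpleGraph V) (B : Set V) (y : V) : ℕ → V → ℝ
  | 0, x => if x = y ∧ x ∈ B then 1 else 0
  | n + 1, x => ∑' z : V, (B \ {y}).indicator (fun w => stepP G w z) x * firstHitP G B y n z

/-- The Green kernel of the walk killed on exiting `B`:
`g_B(x,y) = μ_y⁻¹ ∑_{k≥0} P^x(X_k = y, k < τ_B)`. -/
noncomputable def greenB (G : SimpleGraph V) (B : Set V) (x y : V) : ℝ :=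
  (∑' n : ℕ, killedP G B n x y) / (vdeg G y : ℝ)

/-!
Write `f_k = p_k(x₀, ·) + p_{k+1}(x₀, ·)`, `a_k = f_k(x₀)` and `E` for the Dirichlet form.
Since `P f_l = f_{l+1}` and `⟨f_k, f_l⟩_μ = a_{k+l} + a_{k+l+1}`, Green's formula gives
`E(f_k, f_l) = a_{k+l} - a_{k+l+2}`. Hence `c_k = E(f_k, f_k) = a_{2k} - a_{2k+2}` is nonnegative
with partial sums bounded by `a_0`, and Cauchy–Schwarz applied to `E(f_{k+2}, f_k) = c_{k+1}` makes
it log-convex. A bounded log-convex sequence is nonincreasing, so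
`(n - ⌊n/2⌋) c_n ≤ ∑_{⌊n/2⌋ ≤ k < n} c_k ≤ a_{2⌊n/2⌋}`. Finally Cauchy–Schwarz along a geodesic
from `x₀` to `y` gives `|f_n(y) - f_n(x₀)|² ≤ d(x₀, y) c_n`, i.e. `R_eff ≤ d`.
-/

open Finset

section RandomWalk

variable (G : SimpleGraph V)

lemma stepP_nonneg (x y : V) : 0 ≤ stepP G x y :=
  Set.indicator_nonneg (fun _ _ => by positivity) y

lemma walkP_nonneg (n : ℕ) (x y : V) : 0 ≤ walkP G n x y := by
  induction n generalizing x with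
  | zero => rw [walkP]; split_ifs <;> norm_num
  | succ n ih => exact tsum_nonneg fun z => mul_nonneg (stepP_nonneg G x z) (ih z)

lemma walkP_one (x y : V) : walkP G 1 x y = stepP G x y := by
  rw [walkP, tsum_eq_single y fun z hz => by rw [walkP, if_neg hz, mul_zero], walkP, if_pos rfl,
    mul_one]

lemma hkP_nonneg (n : ℕ) (x y : V) : 0 ≤ hkP G n x y :=
  div_nonneg (walkP_nonneg G n x y) (Nat.cast_nonneg _)

variable [G.LocallyFinite]

lemma vdeg_eq_degree (x : V) : vdeg G x = G.degree x := by
  rw [vdeg, Set.ncard_eq_toFinset_card', ← SimpleGraph.card_neighborFinset_eq_degree]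
  rfl

lemma stepP_eq (x y : V) : stepP G x y = if G.Adj x y then (G.degree x : ℝ)⁻¹ else 0 := by
  simp [stepP, Set.indicator, vdeg_eq_degree]

lemma degree_mul_stepP (x y : V) : (G.degree x : ℝ) * stepP G x y = if G.Adj x y then 1 else 0 := by
  rw [stepP_eq]
  split_ifs with h
  · exact mul_inv_cancel₀ (Nat.cast_ne_zero.2 ((G.degree_pos_iff_exists_adj x).2 ⟨y, h⟩).ne')
  · exact mul_zero _

lemma walkP_succ_eq_sum (n : ℕ) (x y : V) :
    walkP G (n + 1) x y = (G.degree x : ℝ)⁻¹ * ∑ z ∈ G.neighborFinset x, walkP G n z y := by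
  rw [walkP, tsum_eq_sum (s := G.neighborFinset x), mul_sum]
  · refine sum_congr rfl fun z hz => ?_
    rw [stepP_eq, if_pos ((G.mem_neighborFinset x z).1 hz)]
  · intro z hz
    rw [stepP_eq, if_neg (by simpa using hz), zero_mul]

lemma finite_support_walkP (n : ℕ) (x : V) : (Function.support (walkP G n x)).Finite := by
  induction n generalizing x with
  | zero =>
    refine (Set.finite_singleton x).subset fun y hy => ?_
    by_contra h
    exact hy (if_neg (Ne.symm h))
  | succ n ih =>
    refine ((G.neighborFinset x).finite_toSet.biUnion fun z _ => ih z).subset fun y hy => ?_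
    rw [Function.mem_support, walkP_succ_eq_sum] at hy
    obtain ⟨z, hz, hzy⟩ := exists_ne_zero_of_sum_ne_zero (right_ne_zero_of_mul hy)
    exact Set.mem_biUnion hz hzy

lemma summable_walkP_mul (n : ℕ) (x : V) (g : V → ℝ) : Summable fun y => walkP G n x y * g y :=
  summable_of_hasFiniteSupport
    ((finite_support_walkP G n x).subset (Function.support_mul_subset_left _ _))

lemma walkP_add (m n : ℕ) (x y : V) :
    walkP G (m + n) x y = ∑' z, walkP G m x z * walkP G n z y := by
  induction m generalizing x with
  | zero =>
    rw [zero_add, tsum_eq_single x fun z hz => by rw [walkP, if_neg (Ne.symm hz), zero_mul],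
      walkP, if_pos rfl, one_mul]
  | succ m ih =>
    rw [add_right_comm, walkP_succ_eq_sum]
    simp_rw [ih, walkP_succ_eq_sum, mul_assoc, sum_mul, tsum_mul_left]
    rw [Summable.tsum_finsetSum fun z _ => summable_walkP_mul G m z _]

lemma walkP_succ_eq_tsum (n : ℕ) (x y : V) :
    walkP G (n + 1) x y = ∑' z, walkP G n x z * stepP G z y := by
  simp_rw [walkP_add G n 1, walkP_one]

lemma degree_mul_walkP_comm (n : ℕ) (x y : V) :
    (G.degree x : ℝ) * walkP G n x y = G.degree y * walkP G n y x := by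
  induction n generalizing x y with
  | zero =>
    by_cases h : x = y
    · rw [h]
    · simp only [walkP, if_neg h, if_neg (Ne.symm h), mul_zero]
  | succ n ih =>
    rw [walkP, walkP_succ_eq_tsum, ← tsum_mul_left, ← tsum_mul_left]
    refine tsum_congr fun z => ?_
    calc (G.degree x : ℝ) * (stepP G x z * walkP G n z y)
        = (G.degree z * stepP G z x) * walkP G n z y := by
          rw [← mul_assoc, degree_mul_stepP, degree_mul_stepP, G.adj_comm]
      _ = G.degree y * (walkP G n y z * stepP G z x) := by
          rw [mul_comm (G.degree z : ℝ), mul_assoc, ih]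
          ring

lemma walkP_succ_ne_zero_of_adj {n : ℕ} {x y z : V} (h : walkP G n x y ≠ 0) (hyz : G.Adj y z) :
    walkP G (n + 1) x z ≠ 0 := by
  have hstep : 0 < stepP G y z := by
    rw [stepP_eq, if_pos hyz]
    exact inv_pos.2 (Nat.cast_pos.2 ((G.degree_pos_iff_exists_adj y).2 ⟨z, hyz⟩))
  refine (lt_of_lt_of_le (mul_pos ((walkP_nonneg G n x y).lt_of_ne' h) hstep) ?_).ne'
  rw [walkP_succ_eq_tsum]
  exact (summable_walkP_mul G n x _).le_tsum y fun w _ =>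
    mul_nonneg (walkP_nonneg G n x w) (stepP_nonneg G w z)

lemma exists_finset_support_walkP_subset (x : V) (K : ℕ) :
    ∃ S : Finset V, ∀ j ≤ K, Function.support (walkP G j x) ⊆ S :=
  ⟨(range (K + 1)).biUnion fun j => (finite_support_walkP G j x).toFinset, fun j hj y hy => by
    simp only [coe_biUnion, coe_range, Set.mem_Iio, Set.Finite.coe_toFinset, Set.mem_iUnion]
    exact ⟨j, by omega, hy⟩⟩

end RandomWalk

section HeatKernel

variable {G : SimpleGraph V} [G.LocallyFinite]

lemma hkP_eq (n : ℕ) (x y : V) : hkP G n x y = walkP G n x y / G.degree y := by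
  rw [hkP, vdeg_eq_degree]

lemma hkP_comm (hdeg : ∀ x, 0 < G.degree x) (n : ℕ) (x y : V) : hkP G n x y = hkP G n y x := by
  rw [hkP_eq, hkP_eq, div_eq_div_iff (Nat.cast_ne_zero.2 (hdeg y).ne')
    (Nat.cast_ne_zero.2 (hdeg x).ne')]
  linarith [degree_mul_walkP_comm G n x y]

lemma sum_degree_mul_hkP_mul_hkP (hdeg : ∀ x, 0 < G.degree x) {x₀ : V} {S : Finset V} {k : ℕ}
    (hS : Function.support (walkP G k x₀) ⊆ S) (l : ℕ) :
    ∑ x ∈ S, (G.degree x : ℝ) * hkP G k x₀ x * hkP G l x₀ x = hkP G (k + l) x₀ x₀ := by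
  rw [hkP_eq, walkP_add, tsum_eq_sum (s := S) fun x hx => ?_, sum_div]
  · refine sum_congr rfl fun x _ => ?_
    rw [hkP_comm hdeg l, hkP_eq, hkP_eq, mul_div_cancel₀ _ (Nat.cast_ne_zero.2 (hdeg x).ne'),
      mul_div_assoc]
  · rw [Function.notMem_support.1 fun h => hx (hS h), zero_mul]

lemma sum_neighborFinset_hkP (hdeg : ∀ x, 0 < G.degree x) (k : ℕ) (x₀ y : V) :
    ∑ z ∈ G.neighborFinset y, hkP G k x₀ z = G.degree y * hkP G (k + 1) x₀ y := by
  rw [hkP_comm hdeg (k + 1), hkP_eq, walkP_succ_eq_sum, ← mul_div_assoc,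
    mul_inv_cancel_left₀ (Nat.cast_ne_zero.2 (hdeg y).ne'), sum_div]
  exact sum_congr rfl fun z _ => by rw [hkP_comm hdeg, hkP_eq]

end HeatKernel

/-- Summing over ordered pairs counts every edge twice: this is twice the Dirichlet form of `f`
and `g` on the edges inside `S`. -/
noncomputable def edgeForm (G : SimpleGraph V) (S : Finset V) (f g : V → ℝ) : ℝ :=
  ∑ e ∈ (S ×ˢ S).filter (fun e => G.Adj e.1 e.2), (f e.1 - f e.2) * (g e.1 - g e.2)

section EdgeForm

variable (G : SimpleGraph V)

lemma edgeForm_self_nonneg (S : Finset V) (f : V → ℝ) : 0 ≤ edgeForm G S f f :=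
  sum_nonneg fun _ _ => mul_self_nonneg _

lemma edgeForm_sq_le (S : Finset V) (f g : V → ℝ) :
    edgeForm G S f g ^ 2 ≤ edgeForm G S f f * edgeForm G S g g := by
  simp only [edgeForm, ← sq]
  exact sum_mul_sq_le_sq_mul_sq _ _ _

variable {G}

lemma edgeForm_eq_two_mul_sum [G.LocallyFinite] {S : Finset V} {f : V → ℝ}
    (hS : ∀ x ∈ S, f x ≠ 0 → G.neighborFinset x ⊆ S) (g : V → ℝ) :
    edgeForm G S f g
      = 2 * ∑ x ∈ S, f x * (G.degree x * g x - ∑ y ∈ G.neighborFinset x, g y) := by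
  set A := (S ×ˢ S).filter (fun e => G.Adj e.1 e.2)
  have hswap : ∑ e ∈ A, f e.2 * (g e.2 - g e.1) = ∑ e ∈ A, f e.1 * (g e.1 - g e.2) :=
    sum_equiv (Equiv.prodComm V V) (by simp [A, G.adj_comm, and_comm]) fun _ _ => rfl
  have hrow : ∀ x ∈ S, ∑ y ∈ S.filter (G.Adj x), f x * (g x - g y)
      = f x * (G.degree x * g x - ∑ y ∈ G.neighborFinset x, g y) := by
    intro x hx
    rcases eq_or_ne (f x) 0 with h | h
    · simp [h]
    have hN : S.filter (G.Adj x) = G.neighborFinset x := by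
      ext y
      simpa using fun hy => hS x hx h ((G.mem_neighborFinset x y).2 hy)
    rw [← mul_sum, sum_sub_distrib, sum_const, hN, G.card_neighborFinset_eq_degree, nsmul_eq_mul]
  calc edgeForm G S f g
      = ∑ e ∈ A, f e.1 * (g e.1 - g e.2) + ∑ e ∈ A, f e.2 * (g e.2 - g e.1) := by
        rw [← sum_add_distrib]
        exact sum_congr rfl fun _ _ => by ring
    _ = 2 * ∑ x ∈ S, ∑ y ∈ S.filter (G.Adj x), f x * (g x - g y) := by
        rw [hswap, ← two_mul, sum_filter, sum_product]
        simp_rw [sum_filter]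
    _ = _ := by rw [sum_congr rfl hrow]

lemma sum_darts_sub {u v : V} (p : G.Walk u v) (f : V → ℝ) :
    (p.darts.map fun d => f d.snd - f d.fst).sum = f v - f u := by
  induction p with
  | nil => simp
  | cons h p ih =>
    rw [SimpleGraph.Walk.darts_cons, List.map_cons, List.sum_cons, ih]
    ring

lemma two_mul_sum_darts_sq_le_edgeForm {u v : V} {p : G.Walk u v} (hp : p.IsTrail)
    {S : Finset V} (hS : ∀ w ∈ p.support, w ∈ S) (f : V → ℝ) :
    2 * ∑ d ∈ p.darts.toFinset, (f d.snd - f d.fst) ^ 2 ≤ edgeForm G S f f := by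
  set D := p.darts.toFinset
  have hedge : ∀ d ∈ D, ∀ d' ∈ D, d.edge = d'.edge → d = d' := fun d hd d' hd' =>
    List.inj_on_of_nodup_map hp.edges_nodup (List.mem_toFinset.1 hd) (List.mem_toFinset.1 hd')
  have hdisj : Disjoint (D.image (·.toProd)) (D.image (·.symm.toProd)) := by
    simp only [disjoint_left, mem_image, not_exists, not_and]
    rintro _ ⟨d, hd, rfl⟩ d' hd' h
    have hdd' : d'.symm = d := SimpleGraph.Dart.toProd_injective h
    exact d'.symm_ne (hdd' ▸ (hedge d' hd' d hd (hdd' ▸ d'.edge_symm).symm).symm)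
  have hsub : D.image (·.toProd) ∪ D.image (·.symm.toProd)
      ⊆ (S ×ˢ S).filter (fun e => G.Adj e.1 e.2) := by
    intro e he
    simp only [mem_union, mem_image] at he
    obtain ⟨d, hd, rfl⟩ | ⟨d, hd, rfl⟩ := he <;>
    · have hd := List.mem_toFinset.1 hd
      simp [hS _ (p.dart_fst_mem_support_of_mem_darts hd),
        hS _ (p.dart_snd_mem_support_of_mem_darts hd), d.adj, d.adj.symm]
  calc 2 * ∑ d ∈ D, (f d.snd - f d.fst) ^ 2
      = ∑ e ∈ D.image (·.toProd) ∪ D.image (·.symm.toProd), (f e.1 - f e.2) * (f e.1 - f e.2) := by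
        rw [sum_union hdisj, sum_image fun _ _ _ _ h => SimpleGraph.Dart.toProd_injective h,
          sum_image fun _ _ _ _ h => SimpleGraph.Dart.symm_involutive.injective
            (SimpleGraph.Dart.toProd_injective h)]
        simp only [← sq, SimpleGraph.Dart.symm_toProd, Prod.fst_swap, Prod.snd_swap]
        rw [two_mul]
        exact congrArg₂ _ (sum_congr rfl fun _ _ => sub_sq_comm _ _) rfl
    _ ≤ edgeForm G S f f :=
        sum_le_sum_of_subset_of_nonneg hsub fun _ _ _ => mul_self_nonneg _

lemma two_mul_sq_sub_le_length_mul_edgeForm {u v : V} {p : G.Walk u v} (hp : p.IsTrail)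
    {S : Finset V} (hS : ∀ w ∈ p.support, w ∈ S) (f : V → ℝ) :
    2 * (f v - f u) ^ 2 ≤ p.length * edgeForm G S f f := by
  have hnd : p.darts.Nodup := hp.edges_nodup.of_map _
  calc 2 * (f v - f u) ^ 2 = 2 * (∑ d ∈ p.darts.toFinset, (f d.snd - f d.fst)) ^ 2 := by
        rw [List.sum_toFinset _ hnd, sum_darts_sub]
    _ ≤ 2 * (p.length * ∑ d ∈ p.darts.toFinset, (f d.snd - f d.fst) ^ 2) := by
        gcongr
        simpa [List.toFinset_card_of_nodup hnd] using
          sq_sum_le_card_mul_sum_sq (s := p.darts.toFinset) (f := fun d => f d.snd - f d.fst)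
    _ ≤ p.length * edgeForm G S f f := by
        rw [mul_left_comm]
        gcongr
        exact two_mul_sum_darts_sq_le_edgeForm hp hS f

end EdgeForm

lemma antitone_of_convex_of_bddAbove {c : ℕ → ℝ} (hconv : ∀ k, 2 * c (k + 1) ≤ c k + c (k + 2))
    (hbdd : BddAbove (Set.range c)) : Antitone c := by
  refine antitone_nat_of_succ_le fun k => ?_
  by_contra! hlt
  obtain ⟨M, hM⟩ := hbdd
  set δ := c (k + 1) - c k
  have hgrowth : ∀ j : ℕ, c k + j * δ ≤ c (k + j) ∧ δ ≤ c (k + j + 1) - c (k + j) := by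
    intro j
    induction j with
    | zero => simp [δ]
    | succ j ih =>
      have := hconv (k + j)
      rw [← add_assoc]
      push_cast
      constructor <;> linarith [ih.1, ih.2]
  obtain ⟨j, hj⟩ := exists_nat_gt ((M - c k) / δ)
  rw [div_lt_iff₀ (sub_pos.2 hlt)] at hj
  linarith [hM (Set.mem_range_self (k + j)), (hgrowth j).1]

noncomputable def hkSum (G : SimpleGraph V) (x₀ : V) (k : ℕ) (y : V) : ℝ :=
  hkP G k x₀ y + hkP G (k + 1) x₀ y

/-- The energy `E(f_k, f_k)`: half of `edgeForm` of `hkSum G x₀ k` with itself, see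
`edgeForm_hkSum_self`. -/
noncomputable def hkEnergy (G : SimpleGraph V) (x₀ : V) (k : ℕ) : ℝ :=
  hkSum G x₀ (2 * k) x₀ - hkSum G x₀ (2 * k + 2) x₀

section Energy

variable {G : SimpleGraph V}

lemma hkSum_nonneg (x₀ : V) (k : ℕ) (y : V) : 0 ≤ hkSum G x₀ k y :=
  add_nonneg (hkP_nonneg G k x₀ y) (hkP_nonneg G (k + 1) x₀ y)

lemma sum_range_hkEnergy (x₀ : V) (n : ℕ) :
    ∑ k ∈ range n, hkEnergy G x₀ k = hkSum G x₀ 0 x₀ - hkSum G x₀ (2 * n) x₀ :=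
  sum_range_sub' (fun k => hkSum G x₀ (2 * k) x₀) n

lemma sum_Ico_hkEnergy (x₀ : V) {m n : ℕ} (h : m ≤ n) :
    ∑ k ∈ Ico m n, hkEnergy G x₀ k = hkSum G x₀ (2 * m) x₀ - hkSum G x₀ (2 * n) x₀ := by
  rw [sum_Ico_eq_sub _ h, sum_range_hkEnergy, sum_range_hkEnergy]
  ring

variable [G.LocallyFinite]

lemma sum_neighborFinset_hkSum (hdeg : ∀ x, 0 < G.degree x) (x₀ : V) (k : ℕ) (y : V) :
    ∑ z ∈ G.neighborFinset y, hkSum G x₀ k z = G.degree y * hkSum G x₀ (k + 1) y := by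
  simp only [hkSum, sum_add_distrib, sum_neighborFinset_hkP hdeg, mul_add]

lemma sum_degree_mul_hkSum_mul_hkSum (hdeg : ∀ x, 0 < G.degree x) {x₀ : V} {S : Finset V}
    {k : ℕ} (hk : Function.support (walkP G k x₀) ⊆ S)
    (hk' : Function.support (walkP G (k + 1) x₀) ⊆ S) (l : ℕ) :
    ∑ x ∈ S, (G.degree x : ℝ) * hkSum G x₀ k x * hkSum G x₀ l x
      = hkSum G x₀ (k + l) x₀ + hkSum G x₀ (k + l + 1) x₀ := by
  simp only [hkSum, mul_add, add_mul, sum_add_distrib]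
  rw [sum_degree_mul_hkP_mul_hkP hdeg hk, sum_degree_mul_hkP_mul_hkP hdeg hk,
    sum_degree_mul_hkP_mul_hkP hdeg hk', sum_degree_mul_hkP_mul_hkP hdeg hk',
    show k + (l + 1) = k + l + 1 by omega, show k + 1 + l = k + l + 1 by omega,
    show k + 1 + (l + 1) = k + l + 1 + 1 by omega]

lemma edgeForm_hkSum (hdeg : ∀ x, 0 < G.degree x) {x₀ : V} {S : Finset V} {k : ℕ}
    (hS : ∀ j ≤ k + 2, Function.support (walkP G j x₀) ⊆ S) (l : ℕ) :
    edgeForm G S (hkSum G x₀ k) (hkSum G x₀ l)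
      = 2 * (hkSum G x₀ (k + l) x₀ - hkSum G x₀ (k + l + 2) x₀) := by
  have hnbr : ∀ x ∈ S, hkSum G x₀ k x ≠ 0 → G.neighborFinset x ⊆ S := by
    intro x _ hx z hz
    have hxz := (G.mem_neighborFinset x z).1 hz
    have hwalk : walkP G k x₀ x ≠ 0 ∨ walkP G (k + 1) x₀ x ≠ 0 := by
      contrapose! hx
      simp [hkSum, hkP, hx.1, hx.2]
    rcases hwalk with h | h
    · exact hS (k + 1) (by omega) (walkP_succ_ne_zero_of_adj G h hxz)
    · exact hS (k + 2) le_rfl (walkP_succ_ne_zero_of_adj G h hxz)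
  rw [edgeForm_eq_two_mul_sum hnbr]
  simp_rw [sum_neighborFinset_hkSum hdeg, ← mul_sub, mul_left_comm (hkSum G x₀ k _),
    ← mul_assoc, mul_sub, sum_sub_distrib]
  rw [sum_degree_mul_hkSum_mul_hkSum hdeg (hS k (by omega)) (hS (k + 1) (by omega)),
    sum_degree_mul_hkSum_mul_hkSum hdeg (hS k (by omega)) (hS (k + 1) (by omega))]
  ring_nf

lemma edgeForm_hkSum_self (hdeg : ∀ x, 0 < G.degree x) {x₀ : V} {S : Finset V} {k : ℕ}
    (hS : ∀ j ≤ k + 2, Function.support (walkP G j x₀) ⊆ S) :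
    edgeForm G S (hkSum G x₀ k) (hkSum G x₀ k) = 2 * hkEnergy G x₀ k := by
  rw [edgeForm_hkSum hdeg hS, hkEnergy, two_mul k]

lemma hkEnergy_nonneg (hdeg : ∀ x, 0 < G.degree x) (x₀ : V) (k : ℕ) : 0 ≤ hkEnergy G x₀ k := by
  obtain ⟨S, hS⟩ := exists_finset_support_walkP_subset G x₀ (k + 2)
  linarith [edgeForm_hkSum_self hdeg hS, edgeForm_self_nonneg G S (hkSum G x₀ k)]

-- Cauchy–Schwarz for `edgeForm G S f_{k+2} f_k`.
lemma hkEnergy_succ_sq_le (hdeg : ∀ x, 0 < G.degree x) (x₀ : V) (k : ℕ) :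
    hkEnergy G x₀ (k + 1) ^ 2 ≤ hkEnergy G x₀ k * hkEnergy G x₀ (k + 2) := by
  obtain ⟨S, hS⟩ := exists_finset_support_walkP_subset G x₀ (k + 4)
  have hcross : edgeForm G S (hkSum G x₀ (k + 2)) (hkSum G x₀ k) = 2 * hkEnergy G x₀ (k + 1) := by
    rw [edgeForm_hkSum hdeg hS, hkEnergy, show k + 2 + k = 2 * (k + 1) by ring]
  have hCS := edgeForm_sq_le G S (hkSum G x₀ (k + 2)) (hkSum G x₀ k)
  rw [hcross, edgeForm_hkSum_self hdeg hS,
    edgeForm_hkSum_self hdeg fun j hj => hS j (by omega)] at hCS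
  nlinarith

lemma hkEnergy_le (hdeg : ∀ x, 0 < G.degree x) (x₀ : V) (k : ℕ) :
    hkEnergy G x₀ k ≤ hkSum G x₀ 0 x₀ := by
  have h := single_le_sum (fun j _ => hkEnergy_nonneg hdeg x₀ j) (self_mem_range_succ k)
  rw [sum_range_hkEnergy] at h
  linarith [hkSum_nonneg (G := G) x₀ (2 * (k + 1)) x₀]

-- `hkEnergy` is log-convex, hence convex, and bounded, hence nonincreasing.
lemma hkEnergy_antitone (hdeg : ∀ x, 0 < G.degree x) (x₀ : V) : Antitone (hkEnergy G x₀) := by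
  refine antitone_of_convex_of_bddAbove (fun k => ?_) ⟨hkSum G x₀ 0 x₀, ?_⟩
  · nlinarith [hkEnergy_succ_sq_le hdeg x₀ k, hkEnergy_nonneg hdeg x₀ k,
      hkEnergy_nonneg hdeg x₀ (k + 2), sq_nonneg (hkEnergy G x₀ k - hkEnergy G x₀ (k + 2))]
  · rintro _ ⟨k, rfl⟩
    exact hkEnergy_le hdeg x₀ k

lemma natCast_mul_hkEnergy_le (hdeg : ∀ x, 0 < G.degree x) (x₀ : V) (n : ℕ) :
    n * hkEnergy G x₀ n ≤ 2 * hkSum G x₀ (2 * (n / 2)) x₀ := by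
  have hm : n / 2 ≤ n := Nat.div_le_self n 2
  have hsum : ((n - n / 2 : ℕ) : ℝ) * hkEnergy G x₀ n ≤ hkSum G x₀ (2 * (n / 2)) x₀ := by
    have h := card_nsmul_le_sum (Ico (n / 2) n) (hkEnergy G x₀) _
      fun k hk => hkEnergy_antitone hdeg x₀ (mem_Ico.1 hk).2.le
    rw [Nat.card_Ico, nsmul_eq_mul, sum_Ico_hkEnergy x₀ hm] at h
    linarith [hkSum_nonneg (G := G) x₀ (2 * n) x₀]
  have hn : (n : ℝ) ≤ 2 * ((n - n / 2 : ℕ) : ℝ) := by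
    exact_mod_cast (by omega : n ≤ 2 * (n - n / 2))
  nlinarith [hkEnergy_nonneg hdeg x₀ n]

lemma sq_sub_hkSum_le (hdeg : ∀ x, 0 < G.degree x) (hconn : G.Preconnected) (x₀ y : V)
    (n : ℕ) : (hkSum G x₀ n y - hkSum G x₀ n x₀) ^ 2 ≤ G.dist x₀ y * hkEnergy G x₀ n := by
  obtain ⟨p, hp, hlen⟩ := (hconn x₀ y).exists_path_of_dist
  obtain ⟨S, hS⟩ := exists_finset_support_walkP_subset G x₀ (n + 2)
  have h := two_mul_sq_sub_le_length_mul_edgeForm hp.isTrail (S := S ∪ p.support.toFinset)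
    (fun w hw => mem_union_right _ (List.mem_toFinset.2 hw)) (hkSum G x₀ n)
  rw [edgeForm_hkSum_self hdeg fun j hj => (hS j hj).trans (by simp), hlen] at h
  linarith

end Energy

/-- heat-kernel oscillation bound: with `f_n(y) = p_n(x₀,y) + p_{n+1}(x₀,y)`,
`|f_n(y) − f_n(x₀)|² ≤ (2/n)·d(x₀,y)·f_{2⌊n/2⌋}(x₀)` for all vertices `y`. -/
theorem heat_kernel_oscillation (G : SimpleGraph V) [Infinite V]
    (hconn : G.Connected) (hlf : ∀ v : V, (G.neighborSet v).Finite)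
    (x₀ : V) (n : ℕ) (hn : 1 ≤ n) (y : V) :
    ((hkP G n x₀ y + hkP G (n + 1) x₀ y) - (hkP G n x₀ x₀ + hkP G (n + 1) x₀ x₀)) ^ 2
      ≤ (2 / n) * (G.dist x₀ y : ℝ)
        * (hkP G (2 * (n / 2)) x₀ x₀ + hkP G (2 * (n / 2) + 1) x₀ x₀) := by
  let : G.LocallyFinite := fun v => (hlf v).fintype
  have hdeg : ∀ x, 0 < G.degree x := fun x => hconn.preconnected.degree_pos_of_nontrivial x
  have hn' : (0 : ℝ) < n := by exact_mod_cast hn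
  have henergy : hkEnergy G x₀ n ≤ 2 / n * hkSum G x₀ (2 * (n / 2)) x₀ := by
    rw [div_mul_eq_mul_div, le_div_iff₀ hn', mul_comm]
    exact natCast_mul_hkEnergy_le hdeg x₀ n
  calc (hkSum G x₀ n y - hkSum G x₀ n x₀) ^ 2
      ≤ G.dist x₀ y * hkEnergy G x₀ n := sq_sub_hkSum_le hdeg hconn.preconnected x₀ y n
    _ ≤ G.dist x₀ y * (2 / n * hkSum G x₀ (2 * (n / 2)) x₀) := by gcongr
    _ = 2 / n * G.dist x₀ y * hkSum G x₀ (2 * (n / 2)) x₀ := by ring
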